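/- arXiv:1907.12143 — 9 statements merged into one kernel-verified Lean document; each statement's English description precedes it below -/
import Mathlib

section
/- For every natural number m, every smooth function f: ℝ → ℝ, and every real x, the m-th derivative of x ↦ f(e^x) equals Σ_{r=0}^{m} S₂(m,r)·e^{rx}·f^{(r)}(e^x), where f^{(r)} denotes the r-th derivative of f. -/
open Finset

noncomputable def S2 (l m : ℕ) : ℝ :=
  (1 / (Nat.factorial m : ℝ)) *
    ∑ j ∈ range (m + 1), (-1 : ℝ) ^ (m - j) * (Nat.choose m j : ℝ) * (j : ℝ) ^ l

noncomputable def U (l m : ℕ) : ℝ :=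
  ∑ j ∈ range (m + 1), (-1 : ℝ) ^ j * (Nat.choose m j : ℝ) * (j : ℝ) ^ l

lemma S2_eq_U (l m : ℕ) :
    S2 l m = (-1 : ℝ) ^ m * U l m / (Nat.factorial m : ℝ) := by
  have key : ∑ j ∈ range (m + 1), (-1 : ℝ) ^ (m - j) * (Nat.choose m j : ℝ) * (j : ℝ) ^ l
      = (-1 : ℝ) ^ m * U l m := by
    rw [U, Finset.mul_sum]
    refine Finset.sum_congr rfl fun j hj => ?_
    have hjm : j ≤ m := Nat.lt_succ_iff.mp (Finset.mem_range.mp hj)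
    have h2 : ((-1 : ℝ) ^ j) * ((-1 : ℝ) ^ j) = 1 := by
      rw [← pow_add, ← two_mul, pow_mul]; norm_num
    have h : (-1 : ℝ) ^ (m - j) = (-1) ^ m * (-1) ^ j := by
      have h1 : (-1 : ℝ) ^ (m - j) * (-1) ^ j = (-1) ^ m := by
        rw [← pow_add, Nat.sub_add_cancel hjm]
      calc (-1 : ℝ) ^ (m - j)
          = (-1 : ℝ) ^ (m - j) * (((-1:ℝ))^j * (-1:ℝ)^j) := by rw [h2, mul_one]
        _ = ((-1 : ℝ) ^ (m - j) * (-1:ℝ)^j) * (-1:ℝ)^j := by ring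
        _ = (-1)^m * (-1)^j := by rw [h1]
    rw [h]; ring
  rw [S2, key]; ring

noncomputable def V (l m : ℕ) : ℝ :=
  ∑ i ∈ range (m + 1), (-1 : ℝ) ^ i * (Nat.choose m i : ℝ) * ((i : ℝ) + 1) ^ l

noncomputable def W (l m : ℕ) : ℝ :=
  ∑ i ∈ range (m + 1), (-1 : ℝ) ^ i * (Nat.choose m (i + 1) : ℝ) * ((i : ℝ) + 1) ^ l

lemma U_succ_succ (l m : ℕ) : U (l + 1) (m + 1) = -((m : ℝ) + 1) * V l m := by
  rw [U, Finset.sum_range_succ']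
  simp only [Nat.cast_zero, ne_eq, Nat.succ_ne_zero, not_false_iff, zero_pow, mul_zero, add_zero]
  rw [V, Finset.mul_sum]
  refine Finset.sum_congr rfl fun i _ => ?_
  have h : ((m + 1).choose (i + 1) : ℝ) * ((i : ℝ) + 1) = ((m : ℝ) + 1) * (m.choose i : ℝ) := by
    have h0 : (m + 1) * m.choose i = (m + 1).choose (i + 1) * (i + 1) := by
      simpa [Nat.succ_eq_add_one] using Nat.add_one_mul_choose_eq m i
    exact_mod_cast (congrArg (Nat.cast : ℕ → ℝ) h0).symm
  push_cast
  linear_combination (-(-1:ℝ)^i * ((i:ℝ)+1)^l) * h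

lemma U_split (l m : ℕ) : U l (m + 1) = (0:ℝ)^l - V l m - W l m := by
  rw [U, Finset.sum_range_succ']
  have h0 : (-1 : ℝ) ^ 0 * ((m+1).choose 0 : ℝ) * ((0:ℕ) : ℝ) ^ l = (0:ℝ)^l := by simp
  rw [h0]
  have : ∑ i ∈ range (m + 1), (-1 : ℝ) ^ (i+1) * ((m+1).choose (i+1) : ℝ) * (((i:ℕ)+1 : ℕ) : ℝ) ^ l
      = -(V l m + W l m) := by
    rw [V, W, ← Finset.sum_add_distrib, ← Finset.sum_neg_distrib]
    refine Finset.sum_congr rfl fun i _ => ?_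
    rw [Nat.choose_succ_succ]
    push_cast
    ring
  rw [this]; ring

lemma W_eq (l m : ℕ) : W l m = (0:ℝ)^l - U l m := by
  have hW : W l m = ∑ i ∈ range m, (-1 : ℝ) ^ i * (Nat.choose m (i + 1) : ℝ) * ((i : ℝ) + 1) ^ l := by
    rw [W, Finset.sum_range_succ]
    simp [Nat.choose_succ_self]
  have hU : U l m = -∑ i ∈ range m, (-1 : ℝ) ^ i * (Nat.choose m (i + 1) : ℝ) * ((i : ℝ) + 1) ^ l
      + (0:ℝ)^l := by
    rw [U, Finset.sum_range_succ', ← Finset.sum_neg_distrib]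
    have h0 : (-1 : ℝ) ^ 0 * (m.choose 0 : ℝ) * ((0:ℕ) : ℝ) ^ l = (0:ℝ)^l := by simp
    rw [h0]
    congr 1
    refine Finset.sum_congr rfl fun i _ => ?_
    push_cast
    ring
  rw [hW]
  linarith [hU]

lemma U_rec (l m : ℕ) : U (l + 1) (m + 1) = ((m:ℝ) + 1) * U l (m + 1) - ((m:ℝ) + 1) * U l m := by
  have hV : V l m = U l m - U l (m + 1) := by
    have := U_split l m
    have := W_eq l m
    linarith
  rw [U_succ_succ, hV]; ring

lemma S2_rec (l m : ℕ) : S2 (l + 1) (m + 1) = ((m:ℝ) + 1) * S2 l (m + 1) + S2 l m := by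
  have hfac : ((m+1).factorial : ℝ) = ((m:ℝ)+1) * (m.factorial : ℝ) := by
    rw [Nat.factorial_succ]; push_cast; ring
  have hm : (m.factorial : ℝ) ≠ 0 := Nat.cast_ne_zero.mpr (Nat.factorial_ne_zero m)
  have hm1 : ((m:ℝ) + 1) ≠ 0 := by positivity
  rw [S2_eq_U, S2_eq_U, S2_eq_U, U_rec, hfac]
  field_simp
  ring

lemma S2_zero_right (l : ℕ) : S2 (l + 1) 0 = 0 := by
  simp [S2]

lemma S2_zero_of_lt : ∀ l k : ℕ, l < k → S2 l k = 0 := by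
  intro l
  induction l with
  | zero =>
    intro k hk
    obtain ⟨n, rfl⟩ : ∃ n, k = n + 1 := ⟨k - 1, by omega⟩
    rw [S2_eq_U]
    have : U 0 (n + 1) = 0 := by
      have h := Int.alternating_sum_range_choose (n := n + 1)
      simp only [Nat.succ_ne_zero, if_false] at h
      have : ((∑ i ∈ range (n + 1 + 1), (-1 : ℤ) ^ i * ((n+1).choose i : ℤ) : ℤ) : ℝ) = 0 := by
        rw [h]; simp
      rw [U]
      push_cast at this ⊢
      simpa using this
    rw [this]; simp
  | succ l ih =>
    intro k hk
    obtain ⟨n, rfl⟩ : ∃ n, k = n + 1 := ⟨k - 1, by omega⟩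
    rw [S2_rec, ih (n+1) (by omega), ih n (by omega)]
    ring

lemma S2_zero_zero : S2 0 0 = 1 := by simp [S2]

theorem stmt2 (m : ℕ) (f : ℝ → ℝ) (hf : ContDiff ℝ (⊤ : ℕ∞) f) (x : ℝ) :
    iteratedDeriv m (fun x => f (Real.exp x)) x =
      ∑ r ∈ range (m + 1), S2 m r * Real.exp (r * x) * iteratedDeriv r f (Real.exp x) := by
  have hd : ∀ r : ℕ, Differentiable ℝ (iteratedDeriv r f) := fun r =>
    hf.differentiable_iteratedDeriv r (by exact_mod_cast ENat.coe_lt_top r)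
  induction m generalizing x with
  | zero => simp [S2_zero_zero]
  | succ m ih =>
    have key : ∀ y : ℝ, HasDerivAt
        (fun z => ∑ r ∈ range (m + 1), S2 m r * Real.exp (r * z) * iteratedDeriv r f (Real.exp z))
        (∑ r ∈ range (m + 1),
          ((r : ℝ) * S2 m r * Real.exp (r * y) * iteratedDeriv r f (Real.exp y)
            + S2 m r * Real.exp (((r : ℝ) + 1) * y) * iteratedDeriv (r + 1) f (Real.exp y))) y := by
      intro y
      refine HasDerivAt.fun_sum fun r _ => ?_
      have h1 : HasDerivAt (fun z : ℝ => Real.exp ((r : ℝ) * z))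
          (Real.exp ((r : ℝ) * y) * (r : ℝ)) y := by
        simpa using ((hasDerivAt_id y).const_mul (r : ℝ)).exp
      have h2 : HasDerivAt (fun z : ℝ => iteratedDeriv r f (Real.exp z))
          (iteratedDeriv (r + 1) f (Real.exp y) * Real.exp y) y := by
        have hg : HasDerivAt (iteratedDeriv r f) (deriv (iteratedDeriv r f) (Real.exp y))
            (Real.exp y) := ((hd r) (Real.exp y)).hasDerivAt
        have := hg.comp y (Real.hasDerivAt_exp y)
        rw [← iteratedDeriv_succ] at this
        exact this
      have := (h1.mul h2).const_mul (S2 m r)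
      convert this using 1
      · ext z; ring
      · ext z; simp only [Pi.mul_apply]; ring
      · have hexp : Real.exp (((r:ℝ) + 1) * y) = Real.exp ((r:ℝ) * y) * Real.exp y := by
          rw [← Real.exp_add]; ring_nf
        rw [hexp]; ring
    rw [iteratedDeriv_succ]
    have hfun : iteratedDeriv m (fun x => f (Real.exp x))
        = fun z => ∑ r ∈ range (m + 1), S2 m r * Real.exp (r * z) * iteratedDeriv r f (Real.exp z) :=
      funext fun z => ih z
    rw [hfun, (key x).deriv]
    -- now the algebraic reindexing
    have hA : ∑ r ∈ range (m + 1),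
          (r : ℝ) * S2 m r * Real.exp (r * x) * iteratedDeriv r f (Real.exp x)
        = ∑ r ∈ range (m + 1),
          ((r : ℝ) + 1) * S2 m (r + 1) * Real.exp (((r:ℝ) + 1) * x)
            * iteratedDeriv (r + 1) f (Real.exp x) := by
      rw [Finset.sum_range_succ', Finset.sum_range_succ]
      rw [S2_zero_of_lt m (m + 1) (Nat.lt_succ_self m)]
      push_cast
      simp
    rw [Finset.sum_add_distrib, hA, ← Finset.sum_add_distrib]
    rw [Finset.sum_range_succ' (fun r => S2 (m+1) r * Real.exp (r * x) * iteratedDeriv r f (Real.exp x))]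
    rw [S2_zero_right m]
    push_cast
    simp only [zero_mul, add_zero, mul_zero, zero_add, Nat.cast_zero]
    refine Finset.sum_congr rfl fun r _ => ?_
    rw [S2_rec m r]
    ring
end

section
/- For every natural number n and real x, the n-th derivative of the function t ↦ 1/(1+t²) at x equals (1/(1+x²))·P_n(−2x/(1+x²), −1/(1+x²)), where P_n(x,y) = n!·Σ_{r=0}^{⌊n/2⌋} x^{n−2r}·y^r·(n−r)!/((n−2r)!·r!). -/
open Finset

/-- The two-variable Legendre-like polynomials P_n(x,y). -/
noncomputable def P (n : ℕ) (x y : ℝ) : ℝ :=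
  (Nat.factorial n : ℝ) *
    ∑ r ∈ range (n / 2 + 1),
      x ^ (n - 2 * r) * y ^ r * (Nat.factorial (n - r) : ℝ) /
        ((Nat.factorial (n - 2 * r) : ℝ) * (Nat.factorial r : ℝ))


noncomputable def q (n : ℕ) (x : ℝ) : ℝ :=
  ∑ r ∈ range (n / 2 + 1),
    ((n - r).choose r : ℝ) * (-(2 * x)) ^ (n - 2 * r) * (-(1 + x ^ 2)) ^ r

lemma q_ext (n N : ℕ) (hN : n / 2 + 1 ≤ N) (x : ℝ) :
    q n x = ∑ r ∈ range N,
      ((n - r).choose r : ℝ) * (-(2 * x)) ^ (n - 2 * r) * (-(1 + x ^ 2)) ^ r := by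
  apply Finset.sum_subset (by simpa using hN)
  intro r hr hr'
  simp only [mem_range, not_lt] at hr'
  have : (n - r).choose r = 0 := Nat.choose_eq_zero_of_lt (by omega)
  simp [this]

lemma q_rec (n : ℕ) (x : ℝ) :
    q (n + 2) x = -(2 * x) * q (n + 1) x + -(1 + x ^ 2) * q n x := by
  have h2 : (n + 2) / 2 + 1 = (n / 2 + 1) + 1 := by omega
  rw [q_ext (n+1) ((n/2+1)+1) (by omega) x]
  unfold q
  rw [h2, Finset.sum_range_succ' _ (n/2+1), Finset.sum_range_succ' _ (n/2+1),
    mul_add, Finset.mul_sum, Finset.mul_sum]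
  have key : ∀ k ∈ range (n/2+1),
      ((n + 2 - (k + 1)).choose (k + 1) : ℝ) * (-(2 * x)) ^ (n + 2 - 2 * (k + 1)) * (-(1 + x ^ 2)) ^ (k + 1)
      = -(2 * x) * (((n + 1 - (k + 1)).choose (k + 1) : ℝ) * (-(2 * x)) ^ (n + 1 - 2 * (k + 1)) * (-(1 + x ^ 2)) ^ (k + 1))
        + -(1 + x ^ 2) * (((n - k).choose k : ℝ) * (-(2 * x)) ^ (n - 2 * k) * (-(1 + x ^ 2)) ^ k) := by
    intro k hk
    simp only [mem_range] at hk
    have hkn : 2 * k ≤ n := by omega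
    have e1 : n + 2 - (k + 1) = (n - k) + 1 := by omega
    have e2 : n + 2 - 2 * (k + 1) = n - 2 * k := by omega
    have e3 : n + 1 - (k + 1) = n - k := by omega
    rw [e1, e2, e3, Nat.choose_succ_succ]
    push_cast
    by_cases hc : 2 * k < n
    · obtain ⟨m, hm⟩ : ∃ m, n - 2 * k = m + 1 := ⟨n - 2 * k - 1, by omega⟩
      have e4 : n + 1 - 2 * (k + 1) = m := by omega
      rw [hm, e4, pow_succ]
      ring
    · have hn : n = 2 * k := by omega
      have : (n - k).choose (k + 1) = 0 := Nat.choose_eq_zero_of_lt (by omega)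
      rw [this]
      have e4 : n - 2 * k = 0 := by omega
      rw [e4]
      push_cast
      ring
  rw [Finset.sum_congr rfl key, Finset.sum_add_distrib]
  simp only [Nat.choose_zero_right, Nat.cast_one, pow_zero, one_mul, mul_one,
    Nat.mul_zero, Nat.sub_zero]
  rw [show (-(2*x))^(n+2) = (-(2*x))^(n+1) * (-(2*x)) from pow_succ _ _]
  ring

noncomputable def f : ℝ → ℝ := fun t => 1 / (1 + t ^ 2)

lemma hne (t : ℝ) : (1 + t ^ 2) ≠ 0 := by positivity

lemma f_contDiff : ContDiff ℝ ⊤ f :=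
  contDiff_const.div (contDiff_const.add (contDiff_id.pow 2)) hne

lemma hD (k : ℕ) : Differentiable ℝ (iteratedDeriv k f) :=
  f_contDiff.differentiable_iteratedDeriv k (by simp)

lemma f_hasDeriv (t : ℝ) : HasDerivAt f (-(2 * t) / (1 + t ^ 2) ^ 2) t := by
  have h : HasDerivAt (fun s : ℝ => 1 + s ^ 2) (2 * t) t := by
    simpa using ((hasDerivAt_pow 2 t).const_add 1)
  have hf : f = fun y : ℝ => (1 + y ^ 2)⁻¹ := by
    funext y; simp [f, one_div]
  rw [hf]
  exact h.inv (hne t)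

lemma iD_hasDeriv (k : ℕ) (x : ℝ) :
    HasDerivAt (iteratedDeriv k f) (iteratedDeriv (k + 1) f x) x := by
  have h := ((hD k) x).hasDerivAt
  rwa [← iteratedDeriv_succ] at h

lemma keyrec : ∀ (n : ℕ) (x : ℝ),
    (1 + x ^ 2) * iteratedDeriv (n + 1) f x + (2 * (n : ℝ) + 2) * x * iteratedDeriv n f x
      + ((n : ℝ) * ((n : ℝ) + 1)) * iteratedDeriv (n - 1) f x = 0 := by
  intro n
  induction n with
  | zero =>
    intro x
    simp only [Nat.cast_zero, Nat.zero_sub, zero_mul, zero_add, mul_zero, add_zero]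
    rw [iteratedDeriv_one, (f_hasDeriv x).deriv, iteratedDeriv_zero]
    have h := hne x
    field_simp [f]
    have hfx : f x * (1 + x ^ 2) = 1 := by
      unfold f; field_simp
    linear_combination (2 * x) * hfx
  | succ n ih =>
    intro x
    have hfun : (fun y : ℝ => (1 + y ^ 2) * iteratedDeriv (n + 1) f y
        + (2 * (n : ℝ) + 2) * y * iteratedDeriv n f y
        + ((n : ℝ) * ((n : ℝ) + 1)) * iteratedDeriv (n - 1) f y) = fun _ => (0 : ℝ) :=
      funext ih
    have h1 : HasDerivAt (fun y : ℝ => 1 + y ^ 2) (2 * x) x := by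
      simpa using ((hasDerivAt_pow 2 x).const_add 1)
    have h2 : HasDerivAt (fun y : ℝ => (2 * (n : ℝ) + 2) * y) (2 * (n : ℝ) + 2) x := by
      simpa using (hasDerivAt_id x).const_mul (2 * (n : ℝ) + 2)
    have H : HasDerivAt (fun y : ℝ => (1 + y ^ 2) * iteratedDeriv (n + 1) f y
        + (2 * (n : ℝ) + 2) * y * iteratedDeriv n f y
        + ((n : ℝ) * ((n : ℝ) + 1)) * iteratedDeriv (n - 1) f y)
        (((2 * x) * iteratedDeriv (n + 1) f x + (1 + x ^ 2) * iteratedDeriv (n + 2) f x)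
          + ((2 * (n : ℝ) + 2) * iteratedDeriv n f x
              + ((2 * (n : ℝ) + 2) * x) * iteratedDeriv (n + 1) f x)
          + ((n : ℝ) * ((n : ℝ) + 1)) * iteratedDeriv (n - 1 + 1) f x) x :=
      ((h1.mul (iD_hasDeriv (n + 1) x)).add (h2.mul (iD_hasDeriv n x))).add
        ((iD_hasDeriv (n - 1) x).const_mul _)
    have hzero : ((2 * x) * iteratedDeriv (n + 1) f x + (1 + x ^ 2) * iteratedDeriv (n + 2) f x)
          + ((2 * (n : ℝ) + 2) * iteratedDeriv n f x
              + ((2 * (n : ℝ) + 2) * x) * iteratedDeriv (n + 1) f x)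
          + ((n : ℝ) * ((n : ℝ) + 1)) * iteratedDeriv (n - 1 + 1) f x = 0 := by
      rw [← H.deriv, hfun]
      simp
    have hsub : ((n : ℝ) * ((n : ℝ) + 1)) * iteratedDeriv (n - 1 + 1) f x
        = ((n : ℝ) * ((n : ℝ) + 1)) * iteratedDeriv n f x := by
      rcases Nat.eq_zero_or_pos n with h | h
      · subst h; norm_num
      · rw [Nat.sub_add_cancel h]
    rw [hsub] at hzero
    have hred : n + 1 - 1 = n := rfl
    rw [hred]
    push_cast
    linear_combination hzero

lemma main (n : ℕ) (x : ℝ) :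
    iteratedDeriv n f x = (n.factorial : ℝ) * q n x / (1 + x ^ 2) ^ (n + 1) := by
  induction n using Nat.twoStepInduction with
  | zero =>
    rw [iteratedDeriv_zero]
    simp [q, f]
  | one =>
    rw [iteratedDeriv_one, (f_hasDeriv x).deriv]
    have h0 := hne x
    simp only [q]
    rw [Finset.sum_range_one]
    norm_num
  | more n ih1 ih2 =>
    have hk := keyrec (n + 1) x
    have hred : n + 1 - 1 = n := rfl
    rw [hred] at hk
    have h0 := hne x
    have hp : (1 + x ^ 2) ^ (n + 1) ≠ 0 := pow_ne_zero _ h0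
    have hstep : iteratedDeriv (n + 2) f x =
        (-(2 * (n : ℝ) + 4) * x * iteratedDeriv (n + 1) f x
          - ((n : ℝ) + 1) * ((n : ℝ) + 2) * iteratedDeriv n f x) / (1 + x ^ 2) := by
      rw [eq_div_iff h0]
      push_cast at hk ⊢
      linarith [hk]
    rw [hstep, ih1, ih2, q_rec, Nat.factorial_succ (n + 1), Nat.factorial_succ n]
    push_cast
    field_simp
    ring

theorem stmt3 (n : ℕ) (x : ℝ) :
    iteratedDeriv n (fun t => 1 / (1 + t ^ 2)) x =
      (1 / (1 + x ^ 2)) * P n (-(2 * x) / (1 + x ^ 2)) (-(1 / (1 + x ^ 2))) := by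
  have hx := hne x
  have hf : (fun t : ℝ => 1 / (1 + t ^ 2)) = f := rfl
  rw [hf, main n x, P]
  have hsum : ∑ r ∈ range (n / 2 + 1),
      (-(2 * x) / (1 + x ^ 2)) ^ (n - 2 * r) * (-(1 / (1 + x ^ 2))) ^ r * ((n - r).factorial : ℝ) /
        (((n - 2 * r).factorial : ℝ) * (r.factorial : ℝ))
      = (∑ r ∈ range (n / 2 + 1),
          ((n - r).choose r : ℝ) * (-(2 * x)) ^ (n - 2 * r) * (-(1 + x ^ 2)) ^ r) / (1 + x ^ 2) ^ n := by
    rw [Finset.sum_div]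
    apply Finset.sum_congr rfl
    intro r hr
    simp only [mem_range] at hr
    have h2r : 2 * r ≤ n := by omega
    have hc : ((n - r).choose r : ℝ) = ((n - r).factorial : ℝ) /
        ((r.factorial : ℝ) * ((n - 2 * r).factorial : ℝ)) := by
      rw [Nat.cast_choose ℝ (show r ≤ n - r by omega), show n - r - r = n - 2 * r from by omega]
    have epow : (1 + x ^ 2) ^ n = (1 + x ^ 2) ^ (n - 2 * r) * ((1 + x ^ 2) ^ r * (1 + x ^ 2) ^ r) := by
      rw [← pow_add, ← pow_add]
      congr 1
      omega
    have hf2 : ((n - 2 * r).factorial : ℝ) ≠ 0 := Nat.cast_ne_zero.mpr (Nat.factorial_ne_zero _)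
    have hf3 : ((r.factorial : ℕ) : ℝ) ≠ 0 := Nat.cast_ne_zero.mpr (Nat.factorial_ne_zero _)
    rw [hc, epow, div_pow, neg_pow (1 / (1 + x ^ 2)), neg_pow (1 + x ^ 2)]
    field_simp
    have hinv : ((1 + x ^ 2)⁻¹) ^ r * (1 + x ^ 2) ^ r = 1 := by
      rw [inv_pow]; exact inv_mul_cancel₀ (pow_ne_zero _ hx)
    linear_combination (norm := ring_nf) (x ^ (n - 2 * r) * (-2) ^ (n - 2 * r)) * hinv
  rw [hsum]
  unfold q
  rw [pow_succ]
  field_simp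
  ring
end

section
/- For every real a > 0, natural number n, and real x, the n-th derivative of t ↦ e^{−a·t²} at x equals H_n(−2ax, −a)·e^{−ax²}, where H_n(x,y) = n!·Σ_{r=0}^{⌊n/2⌋} x^{n−2r}·y^r/((n−2r)!·r!) is the two-variable Hermite (Kampé de Fériet) polynomial. -/
open Finset

/-- The two-variable Hermite (Kampé de Fériet) polynomials H_n(x,y). -/
noncomputable def H (n : ℕ) (x y : ℝ) : ℝ :=
  (Nat.factorial n : ℝ) *
    ∑ r ∈ range (n / 2 + 1),
      x ^ (n - 2 * r) * y ^ r /
        ((Nat.factorial (n - 2 * r) : ℝ) * (Nat.factorial r : ℝ))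

lemma H_eq (n : ℕ) (x y : ℝ) :
    H n x y = ∑ r ∈ range (n+1), (if 2*r ≤ n then
      (Nat.factorial n : ℝ) * (x ^ (n - 2*r) * y ^ r /
        ((Nat.factorial (n - 2*r) : ℝ) * (Nat.factorial r : ℝ))) else 0) := by
  rw [H, Finset.mul_sum]
  rw [← Finset.sum_subset
      (by intro r hr; simp only [mem_range] at hr ⊢; omega : range (n/2+1) ⊆ range (n+1))
      (by intro r hr hr2; simp only [mem_range] at hr hr2; rw [if_neg (by omega)])]
  apply Finset.sum_congr rfl
  intro r hr
  simp only [mem_range] at hr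
  rw [if_pos (by omega)]

lemma H_zero (x y : ℝ) : H 0 x y = 1 := by
  simp [H]

lemma H_one (x y : ℝ) : H 1 x y = x := by
  simp [H]

lemma H_rec (n : ℕ) (x y : ℝ) :
    H (n+2) x y = x * H (n+1) x y + 2*(n+1)*y * H n x y := by
  rw [H_eq (n+2), H_eq (n+1), H_eq n, Finset.mul_sum, Finset.mul_sum]
  have hBext : ∑ r ∈ range (n+1+1), x * (if 2*r ≤ n+1 then
      (Nat.factorial (n+1) : ℝ) * (x ^ (n+1 - 2*r) * y ^ r /
        ((Nat.factorial (n+1 - 2*r) : ℝ) * (Nat.factorial r : ℝ))) else 0)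
      = ∑ r ∈ range (n+2+1), x * (if 2*r ≤ n+1 then
      (Nat.factorial (n+1) : ℝ) * (x ^ (n+1 - 2*r) * y ^ r /
        ((Nat.factorial (n+1 - 2*r) : ℝ) * (Nat.factorial r : ℝ))) else 0) := by
    rw [Finset.sum_range_succ _ (n+2), if_neg (by omega), mul_zero, add_zero]
  rw [hBext]
  have hsub : ∑ r ∈ range (n+2+1), ((if 2*r ≤ n+2 then
      (Nat.factorial (n+2) : ℝ) * (x ^ (n+2 - 2*r) * y ^ r /
        ((Nat.factorial (n+2 - 2*r) : ℝ) * (Nat.factorial r : ℝ))) else 0)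
      - x * (if 2*r ≤ n+1 then
      (Nat.factorial (n+1) : ℝ) * (x ^ (n+1 - 2*r) * y ^ r /
        ((Nat.factorial (n+1 - 2*r) : ℝ) * (Nat.factorial r : ℝ))) else 0))
      = (∑ r ∈ range (n+2+1), (if 2*r ≤ n+2 then
      (Nat.factorial (n+2) : ℝ) * (x ^ (n+2 - 2*r) * y ^ r /
        ((Nat.factorial (n+2 - 2*r) : ℝ) * (Nat.factorial r : ℝ))) else 0))
      - ∑ r ∈ range (n+2+1), x * (if 2*r ≤ n+1 then
      (Nat.factorial (n+1) : ℝ) * (x ^ (n+1 - 2*r) * y ^ r /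
        ((Nat.factorial (n+1 - 2*r) : ℝ) * (Nat.factorial r : ℝ))) else 0) :=
    Finset.sum_sub_distrib _ _
  have main : ∑ r ∈ range (n+2+1), ((if 2*r ≤ n+2 then
      (Nat.factorial (n+2) : ℝ) * (x ^ (n+2 - 2*r) * y ^ r /
        ((Nat.factorial (n+2 - 2*r) : ℝ) * (Nat.factorial r : ℝ))) else 0)
      - x * (if 2*r ≤ n+1 then
      (Nat.factorial (n+1) : ℝ) * (x ^ (n+1 - 2*r) * y ^ r /
        ((Nat.factorial (n+1 - 2*r) : ℝ) * (Nat.factorial r : ℝ))) else 0))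
      = ∑ r ∈ range (n+1), 2*(↑n+1)*y * (if 2*r ≤ n then
      (Nat.factorial n : ℝ) * (x ^ (n - 2*r) * y ^ r /
        ((Nat.factorial (n - 2*r) : ℝ) * (Nat.factorial r : ℝ))) else 0) := by
    rw [Finset.sum_range_succ' _ (n+2)]
    have f0 : (if 2*0 ≤ n+2 then
        (Nat.factorial (n+2) : ℝ) * (x ^ (n+2 - 2*0) * y ^ 0 /
          ((Nat.factorial (n+2 - 2*0) : ℝ) * (Nat.factorial 0 : ℝ))) else 0)
        - x * (if 2*0 ≤ n+1 then
        (Nat.factorial (n+1) : ℝ) * (x ^ (n+1 - 2*0) * y ^ 0 /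
          ((Nat.factorial (n+1 - 2*0) : ℝ) * (Nat.factorial 0 : ℝ))) else 0) = 0 := by
      rw [if_pos (by omega), if_pos (by omega)]
      have hf1 : ((n+2).factorial : ℝ) ≠ 0 := Nat.cast_ne_zero.2 (Nat.factorial_ne_zero _)
      have hf2 : ((n+1).factorial : ℝ) ≠ 0 := Nat.cast_ne_zero.2 (Nat.factorial_ne_zero _)
      simp only [Nat.mul_zero, Nat.sub_zero, pow_zero, Nat.factorial_zero, Nat.cast_one, mul_one]
      field_simp
      ring
    rw [f0, add_zero]
    rw [Finset.sum_range_succ _ (n+1)]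
    rw [if_neg (by omega), if_neg (by omega)]
    simp only [mul_zero, zero_sub, neg_zero, add_zero, sub_zero]
    apply Finset.sum_congr rfl
    intro r hr
    simp only [mem_range] at hr
    by_cases h1 : 2*r ≤ n
    · by_cases h2 : 2*r + 1 ≤ n
      · rw [if_pos (by omega), if_pos (by omega), if_pos h1]
        obtain ⟨m, hm⟩ : ∃ m, n = 2*r + m + 1 := ⟨n - 2*r - 1, by omega⟩
        subst hm
        simp only [show 2*r+m+1+2-2*(r+1) = m+1 from by omega,
          show 2*r+m+1+1-2*(r+1) = m from by omega,
          show 2*r+m+1-2*r = m+1 from by omega]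
        have e1 : ((2*r+m+1+2).factorial : ℝ)
            = (2*r+m+3) * ((2*r+m+2) * ((2*r+m+1).factorial : ℝ)) := by
          rw [show 2*r+m+1+2 = (2*r+m+2)+1 from by omega, Nat.factorial_succ,
            show 2*r+m+2 = (2*r+m+1)+1 from by omega, Nat.factorial_succ]
          push_cast; ring
        have e2 : ((2*r+m+1+1).factorial : ℝ) = (2*r+m+2) * ((2*r+m+1).factorial : ℝ) := by
          rw [show 2*r+m+1+1 = (2*r+m+1)+1 from by omega, Nat.factorial_succ]
          push_cast; ring
        rw [e1, e2, Nat.factorial_succ m, Nat.factorial_succ r]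
        have hf1 : ((2*r+m+1).factorial : ℝ) ≠ 0 := Nat.cast_ne_zero.2 (Nat.factorial_ne_zero _)
        have hf2 : (m.factorial : ℝ) ≠ 0 := Nat.cast_ne_zero.2 (Nat.factorial_ne_zero _)
        have hf3 : (r.factorial : ℝ) ≠ 0 := Nat.cast_ne_zero.2 (Nat.factorial_ne_zero _)
        push_cast
        field_simp
        ring
      · have hn : n = 2*r := by omega
        subst hn
        rw [if_pos (by omega), if_neg (by omega), if_pos (by omega)]
        simp only [show 2*r+2-2*(r+1) = 0 from by omega, show 2*r-2*r = 0 from by omega,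
          pow_zero, Nat.factorial_zero, Nat.cast_one, one_mul, mul_zero, sub_zero]
        have e1 : ((2*r+2).factorial : ℝ)
            = (2*r+2) * ((2*r+1) * ((2*r).factorial : ℝ)) := by
          rw [show 2*r+2 = (2*r+1)+1 from by omega, Nat.factorial_succ,
            show 2*r+1 = (2*r)+1 from by omega, Nat.factorial_succ]
          push_cast; ring
        rw [e1, Nat.factorial_succ r]
        have hf1 : ((2*r).factorial : ℝ) ≠ 0 := Nat.cast_ne_zero.2 (Nat.factorial_ne_zero _)
        have hf3 : (r.factorial : ℝ) ≠ 0 := Nat.cast_ne_zero.2 (Nat.factorial_ne_zero _)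
        push_cast
        field_simp
        ring
    · rw [if_neg (by omega), if_neg (by omega), if_neg h1]
      ring
  linarith [hsub, main]

lemma hasDerivAt_H (n : ℕ) (y x : ℝ) :
    HasDerivAt (fun x => H (n+1) x y) ((n+1) * H n x y) x := by
  have h : HasDerivAt
      (fun x : ℝ => ((Nat.factorial (n+1) : ℝ) *
        ∑ r ∈ range ((n+1)/2+1), x ^ (n+1-2*r) * y^r /
          ((Nat.factorial (n+1-2*r) : ℝ) * (Nat.factorial r : ℝ))))
      ((Nat.factorial (n+1) : ℝ) *
        ∑ r ∈ range ((n+1)/2+1), ((n+1-2*r : ℕ) : ℝ) * x ^ (n+1-2*r-1) * y^r /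
          ((Nat.factorial (n+1-2*r) : ℝ) * (Nat.factorial r : ℝ))) x := by
    apply HasDerivAt.const_mul
    apply HasDerivAt.fun_sum
    intro r _
    exact ((hasDerivAt_pow _ x).mul_const _).div_const _
  have e1 : (fun x => H (n+1) x y) =
      (fun x : ℝ => ((Nat.factorial (n+1) : ℝ) *
        ∑ r ∈ range ((n+1)/2+1), x ^ (n+1-2*r) * y^r /
          ((Nat.factorial (n+1-2*r) : ℝ) * (Nat.factorial r : ℝ)))) := rfl
  rw [e1]
  convert h using 1
  rw [H]
  rw [← Finset.sum_subset
      (by intro r hr; simp only [mem_range] at hr ⊢; omega : range (n/2+1) ⊆ range ((n+1)/2+1))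
      (by
        intro r hr hr2
        simp only [mem_range] at hr hr2
        have h0 : n+1-2*r = 0 := by omega
        rw [h0]
        simp)]
  rw [Finset.mul_sum, Finset.mul_sum, Finset.mul_sum]
  apply Finset.sum_congr rfl
  intro r hr
  simp only [mem_range] at hr
  obtain ⟨k, hk⟩ : ∃ k, n = 2*r + k := ⟨n - 2*r, by omega⟩
  subst hk
  simp only [show 2*r+k+1-2*r = k+1 from by omega, show 2*r+k-2*r = k from by omega,
    show k+1-1 = k from rfl, Nat.factorial_succ]
  have hf1 : ((k).factorial : ℝ) ≠ 0 := Nat.cast_ne_zero.2 (Nat.factorial_ne_zero _)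
  have hf2 : (r.factorial : ℝ) ≠ 0 := Nat.cast_ne_zero.2 (Nat.factorial_ne_zero _)
  push_cast
  field_simp

theorem stmt5 (a : ℝ) (ha : 0 < a) (n : ℕ) (x : ℝ) :
    iteratedDeriv n (fun t => Real.exp (-a * t ^ 2)) x =
      H n (-(2 * a * x)) (-a) * Real.exp (-a * x ^ 2) := by
  have key : ∀ (m : ℕ) (x : ℝ),
      HasDerivAt (fun x => H m (-(2 * a * x)) (-a) * Real.exp (-a * x ^ 2))
        (H (m+1) (-(2 * a * x)) (-a) * Real.exp (-a * x ^ 2)) x := by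
    intro m x
    have hexp : HasDerivAt (fun x : ℝ => Real.exp (-a * x ^ 2))
        (Real.exp (-a * x ^ 2) * (-a * (2 * x))) x := by
      have hin : HasDerivAt (fun x : ℝ => -a * x ^ 2) (-a * (2 * x)) x := by
        simpa using (hasDerivAt_pow 2 x).const_mul (-a)
      exact (Real.hasDerivAt_exp _).comp x hin
    have hlin : HasDerivAt (fun x : ℝ => -(2 * a * x)) (-(2 * a)) x := by
      simpa using ((hasDerivAt_id x).const_mul (2*a)).fun_neg
    match m with
    | 0 =>
      have : HasDerivAt (fun x => H 0 (-(2 * a * x)) (-a) * Real.exp (-a * x ^ 2))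
          (Real.exp (-a * x ^ 2) * (-a * (2 * x))) x := by
        simpa [H_zero] using hexp
      convert this using 1
      rw [H_one]
      ring
    | (k+1) =>
      have hP : HasDerivAt (fun x => H (k+1) (-(2 * a * x)) (-a))
          (((k : ℝ) + 1) * H k (-(2 * a * x)) (-a) * -(2 * a)) x := by
        have := (hasDerivAt_H k (-a) (-(2*a*x))).comp x hlin
        simpa [Function.comp_def] using this
      have : HasDerivAt (fun x => H (k+1) (-(2 * a * x)) (-a) * Real.exp (-a * x ^ 2)) _ x :=
        hP.fun_mul hexp
      convert this using 1
      rw [H_rec k]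
      push_cast
      ring
  induction n generalizing x with
  | zero => simp [H_zero]
  | succ n ih =>
    rw [iteratedDeriv_succ]
    have : iteratedDeriv n (fun t => Real.exp (-a * t ^ 2)) =
        fun x => H n (-(2 * a * x)) (-a) * Real.exp (-a * x ^ 2) := funext ih
    rw [this]
    exact (key n x).deriv
end

section
/- For every natural number n, every real ν > 0, and every real x, the n-th derivative of t ↦ (1+t²)^{−ν} at x equals (1+x²)^{−ν}·P_n^ν(−2x/(1+x²), −1/(1+x²)), where P_n^ν(x,y) = (n!/Γ(ν))·Σ_{r=0}^{⌊n/2⌋} x^{n−2r}·y^r·Γ(ν+n−r)/((n−2r)!·r!). -/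
open Finset

/-- The polynomials P_n^ν(x,y). -/
noncomputable def Pnu (n : ℕ) (ν : ℝ) (x y : ℝ) : ℝ :=
  ((Nat.factorial n : ℝ) / Real.Gamma ν) *
    ∑ r ∈ range (n / 2 + 1),
      x ^ (n - 2 * r) * y ^ r * Real.Gamma (ν + n - r) /
        ((Nat.factorial (n - 2 * r) : ℝ) * (Nat.factorial r : ℝ))

/-- auxiliary coefficients -/
noncomputable def cc (ν : ℝ) (n r : ℕ) : ℝ :=
  if 2 * r ≤ n then
    (Nat.factorial n : ℝ) * (-1) ^ (n - r) * 2 ^ (n - 2 * r) * Real.Gamma (ν + n - r) /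
      (Real.Gamma ν * (Nat.factorial (n - 2 * r) : ℝ) * (Nat.factorial r : ℝ))
  else 0

lemma cc_zero {ν : ℝ} {n r : ℕ} (h : ¬ 2 * r ≤ n) : cc ν n r = 0 := by
  simp [cc, h]

lemma cc_rec0 (ν : ℝ) (hν : 0 < ν) (n : ℕ) :
    cc ν (n + 1) 0 = -2 * (ν + n - 0) * cc ν n 0 := by
  have hne : ν + (n:ℝ) ≠ 0 := by positivity
  have hΓ : Real.Gamma ν ≠ 0 := (Real.Gamma_pos_of_pos hν).ne'
  simp only [cc, if_pos (by omega : 2*0 ≤ n+1), if_pos (by omega : 2*0 ≤ n), Nat.mul_zero,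
    Nat.sub_zero, Nat.cast_zero, sub_zero]
  have hG : Real.Gamma (ν + ((n:ℝ)+1)) = (ν + n) * Real.Gamma (ν + n) := by
    rw [show ν + ((n:ℝ)+1) = (ν + n) + 1 by ring, Real.Gamma_add_one hne]
  rw [Nat.factorial_succ]
  push_cast
  rw [hG, pow_succ, pow_succ]
  have hf : (Nat.factorial n : ℝ) ≠ 0 := by positivity
  field_simp

lemma cc_rec (ν : ℝ) (hν : 0 < ν) (n s : ℕ) :
    cc ν (n + 1) (s + 1) =
      -2 * (ν + n - (s + 1)) * cc ν n (s + 1) + ((n : ℝ) - 2 * s) * cc ν n s := by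
  have hΓ : Real.Gamma ν ≠ 0 := (Real.Gamma_pos_of_pos hν).ne'
  by_cases h1 : 2 * (s + 1) ≤ n
  · obtain ⟨m, rfl⟩ : ∃ m, n = m + (2 * s + 2) := ⟨n - (2 * s + 2), by omega⟩
    simp only [cc, if_pos (by omega : 2*(s+1) ≤ m+(2*s+2)+1),
      if_pos (by omega : 2*(s+1) ≤ m+(2*s+2)), if_pos (by omega : 2*s ≤ m+(2*s+2))]
    rw [show m+(2*s+2)+1 - (s+1) = m+s+2 by omega,
        show m+(2*s+2)+1 - 2*(s+1) = m+1 by omega,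
        show m+(2*s+2) - (s+1) = m+s+1 by omega,
        show m+(2*s+2) - 2*(s+1) = m by omega,
        show m+(2*s+2) - s = m+s+2 by omega,
        show m+(2*s+2) - 2*s = m+2 by omega,
        show ν + ((m+(2*s+2)+1 : ℕ) : ℝ) - ((s+1 : ℕ) : ℝ) = (ν + ((m+s+1:ℕ):ℝ)) + 1 by push_cast; ring,
        show ν + ((m+(2*s+2) : ℕ) : ℝ) - ((s+1 : ℕ) : ℝ) = ν + ((m+s+1:ℕ):ℝ) by push_cast; ring,
        show ν + ((m+(2*s+2) : ℕ) : ℝ) - ((s : ℕ) : ℝ) = (ν + ((m+s+1:ℕ):ℝ)) + 1 by push_cast; ring]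
    have hne : ν + ((m+s+1:ℕ):ℝ) ≠ 0 := by positivity
    rw [Real.Gamma_add_one hne]
    rw [show m+(2*s+2)+1 = (m+(2*s+2)) + 1 from rfl, Nat.factorial_succ (m+(2*s+2)),
        Nat.factorial_succ (s), show m+2 = (m+1)+1 from rfl, Nat.factorial_succ (m+1),
        Nat.factorial_succ (m)]
    have hm : ((Nat.factorial m : ℕ):ℝ) ≠ 0 := by exact_mod_cast (Nat.factorial_pos m).ne'
    have hs : ((Nat.factorial s : ℕ):ℝ) ≠ 0 := by exact_mod_cast (Nat.factorial_pos s).ne'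
    push_cast
    field_simp
    ring
  · by_cases h2 : 2 * (s + 1) = n + 1
    · obtain rfl : n = 2 * s + 1 := by omega
      simp only [cc, if_pos (by omega : 2*(s+1) ≤ 2*s+1+1), if_pos (by omega : 2*s ≤ 2*s+1)]
      rw [if_neg (by omega : ¬ 2*(s+1) ≤ 2*s+1)]
      rw [show 2*s+1+1 - (s+1) = s+1 by omega, show 2*s+1+1 - 2*(s+1) = 0 by omega,
          show 2*s+1 - s = s+1 by omega, show 2*s+1 - 2*s = 1 by omega,
          show ν + ((2*s+1+1 : ℕ) : ℝ) - ((s+1 : ℕ) : ℝ) = ν + ((s+1:ℕ):ℝ) by push_cast; ring,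
          show ν + ((2*s+1 : ℕ) : ℝ) - ((s : ℕ) : ℝ) = ν + ((s+1:ℕ):ℝ) by push_cast; ring]
      have hs : ((Nat.factorial s : ℕ):ℝ) ≠ 0 := by exact_mod_cast (Nat.factorial_pos s).ne'
      rw [show 2*s+1+1 = (2*s+1)+1 from rfl, Nat.factorial_succ (2*s+1), Nat.factorial_succ s,
          Nat.factorial_zero, Nat.factorial_one]
      push_cast
      field_simp
      ring
    · rw [cc_zero (by omega), cc_zero (by omega)]
      by_cases h3 : 2 * s ≤ n
      · obtain rfl : n = 2 * s := by omega
        push_cast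
        ring
      · rw [cc_zero h3]
        ring

noncomputable def FF (ν : ℝ) (n : ℕ) (x : ℝ) : ℝ :=
  ∑ r ∈ range (n + 1), cc ν n r * x ^ (n - 2 * r) * (1 + x ^ 2) ^ (-(ν + n - r))

lemma FF_hasDerivAt (ν : ℝ) (hν : 0 < ν) (n : ℕ) (x : ℝ) :
    HasDerivAt (FF ν n) (FF ν (n + 1) x) x := by
  have hg : (0:ℝ) < 1 + x ^ 2 := by positivity
  have hD : HasDerivAt (FF ν n)
      (∑ r ∈ range (n + 1), cc ν n r *
        ((↑(n - 2*r) * x ^ (n - 2*r - 1)) * (1 + x ^ 2) ^ (-(ν + n - r)) +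
          x ^ (n - 2*r) * (2*x * (-(ν + (n:ℝ) - r)) * (1 + x ^ 2) ^ (-(ν + (n:ℝ) - r) - 1)))) x := by
    unfold FF
    refine HasDerivAt.fun_sum fun r _ => ?_
    have h2 : HasDerivAt (fun x : ℝ => 1 + x ^ 2) (2 * x) x := by
      simpa using (hasDerivAt_pow 2 x).const_add 1
    have h3 : HasDerivAt (fun x : ℝ => (1 + x ^ 2) ^ (-(ν + (n:ℝ) - r)))
        (2*x * (-(ν + (n:ℝ) - r)) * (1 + x ^ 2) ^ (-(ν + (n:ℝ) - r) - 1)) x :=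
      h2.rpow_const (Or.inl hg.ne')
    have h4 := ((hasDerivAt_pow (n - 2*r) x).mul h3).const_mul (cc ν n r)
    convert h4 using 2
    · rfl
    · simp only [Pi.mul_apply]
      ring
  convert hD using 1
  -- now show FF ν (n+1) x equals the derivative sum
  have key : ∀ r ∈ range (n + 1),
      cc ν n r *
        ((↑(n - 2*r) * x ^ (n - 2*r - 1)) * (1 + x ^ 2) ^ (-(ν + n - r)) +
          x ^ (n - 2*r) * (2*x * (-(ν + (n:ℝ) - r)) * (1 + x ^ 2) ^ (-(ν + (n:ℝ) - r) - 1)))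
      = (-2 * (ν + (n:ℝ) - r) * cc ν n r) *
          (x ^ ((n+1) - 2*r) * (1 + x ^ 2) ^ (-(ν + ((n+1:ℕ):ℝ) - r))) +
        (((n:ℝ) - 2*r) * cc ν n r) *
          (x ^ ((n+1) - 2*(r+1)) * (1 + x ^ 2) ^ (-(ν + ((n+1:ℕ):ℝ) - ((r+1:ℕ):ℝ)))) := by
    intro r _
    by_cases h2r : 2 * r ≤ n
    · rw [show ((n+1) - 2*r) = (n - 2*r) + 1 by omega,
          show ((n+1) - 2*(r+1)) = n - 2*r - 1 by omega,
          show (((n+1):ℕ):ℝ) = (n:ℝ) + 1 by push_cast; ring,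
          show (((r+1):ℕ):ℝ) = (r:ℝ) + 1 by push_cast; ring,
          Nat.cast_sub h2r, pow_succ,
          show -(ν + ((n:ℝ)+1) - r) = -(ν + (n:ℝ) - r) - 1 by ring,
          show -(ν + ((n:ℝ)+1) - ((r:ℝ)+1)) = -(ν + (n:ℝ) - r) by ring]
      push_cast
      ring
    · simp [cc_zero h2r]
  rw [Finset.sum_congr rfl key, Finset.sum_add_distrib]
  unfold FF
  rw [Finset.sum_range_succ'
    (fun s => cc ν (n+1) s * x ^ ((n+1) - 2*s) * (1 + x ^ 2) ^ (-(ν + ((n+1:ℕ):ℝ) - s))) (n+1)]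
  have hT : ∀ k ∈ range (n+1),
      cc ν (n+1) (k+1) * x ^ ((n+1) - 2*(k+1)) * (1 + x ^ 2) ^ (-(ν + ((n+1:ℕ):ℝ) - ((k+1:ℕ):ℝ)))
      = (-2 * (ν + (n:ℝ) - ((k+1:ℕ):ℝ)) * cc ν n (k+1) *
          (x ^ ((n+1) - 2*(k+1)) * (1 + x ^ 2) ^ (-(ν + ((n+1:ℕ):ℝ) - ((k+1:ℕ):ℝ))))) +
        (((n:ℝ) - 2*(k:ℝ)) * cc ν n k *
          (x ^ ((n+1) - 2*(k+1)) * (1 + x ^ 2) ^ (-(ν + ((n+1:ℕ):ℝ) - ((k+1:ℕ):ℝ))))) := by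
    intro k _
    rw [cc_rec ν hν n k]
    push_cast
    ring
  rw [Finset.sum_congr rfl hT, Finset.sum_add_distrib]
  rw [Finset.sum_range_succ
    (fun k => -2 * (ν + (n:ℝ) - ((k+1:ℕ):ℝ)) * cc ν n (k+1) *
      (x ^ ((n+1) - 2*(k+1)) * (1 + x ^ 2) ^ (-(ν + ((n+1:ℕ):ℝ) - ((k+1:ℕ):ℝ))))) n]
  rw [cc_zero (show ¬ 2*(n+1) ≤ n by omega)]
  rw [cc_rec0 ν hν n]
  rw [Finset.sum_range_succ'
    (fun s => -2 * (ν + (n:ℝ) - (s:ℝ)) * cc ν n s *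
      (x ^ ((n+1) - 2*s) * (1 + x ^ 2) ^ (-(ν + ((n+1:ℕ):ℝ) - (s:ℝ))))) n]
  push_cast
  ring

lemma FF_eq_Pnu (ν : ℝ) (hν : 0 < ν) (n : ℕ) (x : ℝ) :
    FF ν n x = (1 + x ^ 2) ^ (-ν) * Pnu n ν (-(2 * x) / (1 + x ^ 2)) (-(1 / (1 + x ^ 2))) := by
  have hg : (0:ℝ) < 1 + x ^ 2 := by positivity
  have hΓ : Real.Gamma ν ≠ 0 := (Real.Gamma_pos_of_pos hν).ne'
  have hsub : range (n / 2 + 1) ⊆ range (n + 1) := by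
    intro r hr
    simp only [mem_range] at *
    omega
  rw [FF, ← Finset.sum_subset hsub (fun r _ hr => by
    have : ¬ 2 * r ≤ n := by simp only [mem_range] at *; omega
    simp [cc_zero this])]
  rw [Pnu, Finset.mul_sum, Finset.mul_sum]
  refine Finset.sum_congr rfl fun r hr => ?_
  have h2r : 2 * r ≤ n := by simp only [mem_range] at hr; omega
  have hrn : r ≤ n := by omega
  rw [cc, if_pos h2r]
  have hkey : (1 + x ^ 2) ^ (-(ν + (n:ℝ) - (r:ℝ)))
      = (1 + x ^ 2) ^ (-ν) / ((1 + x ^ 2) ^ (n - 2*r) * (1 + x ^ 2) ^ r) := by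
    rw [← pow_add, show n - 2*r + r = n - r by omega, ← Real.rpow_natCast (1 + x ^ 2) (n - r),
      ← Real.rpow_sub hg]
    congr 1
    rw [Nat.cast_sub hrn]
    ring
  rw [hkey, show n - r = (n - 2*r) + r by omega, pow_add,
    show (-(2 * x) / (1 + x ^ 2)) ^ (n - 2*r)
        = (-1) ^ (n - 2*r) * 2 ^ (n - 2*r) * x ^ (n - 2*r) / (1 + x ^ 2) ^ (n - 2*r) by
      rw [div_pow, show -(2*x) = (-1)*2*x by ring, mul_pow, mul_pow],
    show (-(1 / (1 + x ^ 2))) ^ r = (-1) ^ r / (1 + x ^ 2) ^ r by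
      rw [show -(1/(1 + x ^ 2)) = (-1)/(1 + x ^ 2) by ring, div_pow]]
  have hp1 : (1 + x ^ 2) ^ (n - 2*r) ≠ 0 := by positivity
  have hp2 : (1 + x ^ 2) ^ r ≠ 0 := by positivity
  have hf1 : ((Nat.factorial (n - 2*r) : ℕ) : ℝ) ≠ 0 := by
    exact_mod_cast (Nat.factorial_pos _).ne'
  have hf2 : ((Nat.factorial r : ℕ) : ℝ) ≠ 0 := by exact_mod_cast (Nat.factorial_pos _).ne'
  field_simp

theorem stmt6 (n : ℕ) (ν : ℝ) (hν : 0 < ν) (x : ℝ) :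
    iteratedDeriv n (fun t => (1 + t ^ 2) ^ (-ν)) x =
      (1 + x ^ 2) ^ (-ν) * Pnu n ν (-(2 * x) / (1 + x ^ 2)) (-(1 / (1 + x ^ 2))) := by
  have key : ∀ (m : ℕ) (y : ℝ), iteratedDeriv m (fun t => (1 + t ^ 2) ^ (-ν)) y = FF ν m y := by
    intro m
    induction m with
    | zero =>
      intro y
      have hΓ : Real.Gamma ν ≠ 0 := (Real.Gamma_pos_of_pos hν).ne'
      simp [FF, cc, hΓ]
    | succ m ih =>
      intro y
      rw [iteratedDeriv_succ]
      have : deriv (iteratedDeriv m (fun t => (1 + t ^ 2) ^ (-ν))) y = deriv (FF ν m) y := by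
        congr 1
        funext z
        exact ih z
      rw [this, (FF_hasDerivAt ν hν m y).deriv]
  rw [key n x, FF_eq_Pnu ν hν n x]
end

section
/- The Laplace-transform representation P_n(x,y) = ∫₀^∞ e^{−s}·H_n(xs, ys) ds holds for all reals x, y and all natural numbers n, where H_n(x,y) = n!·Σ_{r=0}^{⌊n/2⌋} x^{n−2r}·y^r/((n−2r)!·r!) and P_n(x,y) = n!·Σ_{r=0}^{⌊n/2⌋} x^{n−2r}·y^r·(n−r)!/((n−2r)!·r!). -/
open Finset

open MeasureTheory

lemma key_integrable (k : ℕ) :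
    IntegrableOn (fun s : ℝ => Real.exp (-s) * s ^ k) (Set.Ioi 0) := by
  have := Real.GammaIntegral_convergent (s := (k : ℝ) + 1) (by positivity)
  refine this.congr_fun (fun x hx => ?_) measurableSet_Ioi
  rw [add_sub_cancel_right]
  simp only [Real.rpow_natCast]

lemma key (k : ℕ) :
    ∫ s in Set.Ioi (0:ℝ), Real.exp (-s) * s ^ k = (Nat.factorial k : ℝ) := by
  rw [← Real.Gamma_nat_eq_factorial, Real.Gamma_eq_integral (by positivity)]
  refine setIntegral_congr_fun measurableSet_Ioi (fun x hx => ?_)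
  simp only [show ((k:ℝ)+1) - 1 = (k:ℝ) by ring, Real.rpow_natCast]

theorem stmt8 (n : ℕ) (x y : ℝ) :
    P n x y = ∫ s in Set.Ioi (0 : ℝ), Real.exp (-s) * H n (x * s) (y * s) := by
  have hpt : ∀ s : ℝ, Real.exp (-s) * H n (x * s) (y * s) =
      ∑ r ∈ range (n / 2 + 1),
        ((Nat.factorial n : ℝ) * (x ^ (n - 2 * r) * y ^ r /
          ((Nat.factorial (n - 2 * r) : ℝ) * (Nat.factorial r : ℝ)))) *
          (Real.exp (-s) * s ^ (n - r)) := by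
    intro s
    rw [H, mul_comm, mul_assoc, sum_mul, mul_sum]
    refine Finset.sum_congr rfl (fun r hr => ?_)
    have h2r : 2 * r ≤ n := by
      have := Finset.mem_range.mp hr
      omega
    have hexp : n - 2 * r + r = n - r := by omega
    rw [mul_pow, mul_pow, ← hexp, pow_add]
    ring
  simp_rw [hpt]
  rw [integral_finset_sum _ (fun r _ => (key_integrable (n - r)).const_mul _)]
  rw [P, mul_sum]
  refine Finset.sum_congr rfl (fun r hr => ?_)
  rw [integral_const_mul, key]
  ring
end

section
/- Define the derivative polynomials Π_n by Π_0(ξ) = ξ and Π_{n+1}(ξ) = (1+ξ²)·Π_n'(ξ). Then for every natural number n and every real x with cos x ≠ 0, the n-th derivative of tan at x equals Π_n(tan x). -/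
/-- The tangent derivative polynomials: Π₀ = X, Π_{n+1} = (1+X²)·Π_n'. -/
noncomputable def Pi' : ℕ → Polynomial ℝ
  | 0 => Polynomial.X
  | n + 1 => (1 + Polynomial.X ^ 2) * Polynomial.derivative (Pi' n)

theorem stmt13 (n : ℕ) (x : ℝ) (hx : Real.cos x ≠ 0) :
    iteratedDeriv n Real.tan x = (Pi' n).eval (Real.tan x) := by
  induction n generalizing x with
  | zero => simp [Pi']
  | succ n ih =>
    rw [iteratedDeriv_succ]
    have hopen : IsOpen {y : ℝ | Real.cos y ≠ 0} :=
      isOpen_compl_iff.mpr (isClosed_eq Real.continuous_cos continuous_const)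
    have hev : iteratedDeriv n Real.tan =ᶠ[nhds x]
        fun y => (Pi' n).eval (Real.tan y) := by
      filter_upwards [hopen.mem_nhds hx] with y hy using ih y hy
    rw [hev.deriv_eq]
    have hd : HasDerivAt (fun y => (Pi' n).eval (Real.tan y))
        ((Polynomial.derivative (Pi' n)).eval (Real.tan x) * (1 / Real.cos x ^ 2)) x :=
      ((Pi' n).hasDerivAt (Real.tan x)).comp x (Real.hasDerivAt_tan hx)
    rw [hd.deriv]
    have h1 : 1 / Real.cos x ^ 2 = 1 + Real.tan x ^ 2 := by
      rw [Real.tan_eq_sin_div_cos]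
      have := Real.sin_sq_add_cos_sq x
      field_simp
      linarith
    simp [Pi', h1, mul_comm]
end

section
/- Define Π_n by Π_0(ξ) = ξ and Π_{n+1}(ξ) = (1+ξ²)·Π_n'(ξ). Then for all real t, ξ with |ξ·tan t| < 1 and t in a neighborhood of 0, Σ_{n=0}^∞ (t^n/n!)·Π_n(ξ) = (ξ + tan t)/(1 − ξ·tan t). -/
open Polynomial in
private lemma one_add_tan_sq {z : ℂ} (hz : Complex.cos z ≠ 0) :
    1 + Complex.tan z ^ 2 = 1 / Complex.cos z ^ 2 := by
  rw [Complex.tan_eq_sin_div_cos]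
  field_simp
  linear_combination Complex.sin_sq_add_cos_sq z

open Polynomial in
private lemma iter_deriv_eq (ξ : ℝ) (n : ℕ) :
    iteratedDeriv n (fun z : ℂ => Complex.tan (z + (Real.arctan ξ : ℂ)))
      =ᶠ[nhds (0 : ℂ)]
    fun z : ℂ => ((Pi' n).map (algebraMap ℝ ℂ)).eval
      (Complex.tan (z + (Real.arctan ξ : ℂ))) := by
  set a : ℂ := (Real.arctan ξ : ℂ) with ha
  have hUopen : IsOpen {z : ℂ | Complex.cos (z + a) ≠ 0} := by
    have : {z : ℂ | Complex.cos (z + a) ≠ 0} =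
        (fun z : ℂ => Complex.cos (z + a)) ⁻¹' {0}ᶜ := rfl
    rw [this]
    exact (Complex.continuous_cos.comp (continuous_id.add continuous_const)).isOpen_preimage _
      isOpen_compl_singleton
  have h0 : (0 : ℂ) ∈ {z : ℂ | Complex.cos (z + a) ≠ 0} := by
    simp only [Set.mem_setOf_eq, zero_add, ha, ← Complex.ofReal_cos]
    exact_mod_cast (Real.cos_arctan_pos ξ).ne'
  have hU : {z : ℂ | Complex.cos (z + a) ≠ 0} ∈ nhds (0 : ℂ) :=
    hUopen.mem_nhds h0
  induction n with
  | zero =>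
    apply Filter.EventuallyEq.of_eq
    funext z
    simp [Pi', iteratedDeriv_zero]
  | succ n ih =>
    rw [iteratedDeriv_succ]
    refine (ih.deriv).trans ?_
    filter_upwards [hU] with z hz
    have h1 : HasDerivAt (fun w : ℂ => w + a) 1 z := (hasDerivAt_id z).add_const a
    have h2 : HasDerivAt Complex.tan (1 / Complex.cos (z + a) ^ 2) (z + a) :=
      Complex.hasDerivAt_tan hz
    have h3 : HasDerivAt (fun w : ℂ => Complex.tan (w + a))
        (1 / Complex.cos (z + a) ^ 2) z := by
      have h := h2.comp z h1; rw [mul_one] at h; exact h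
    have h4 := (((Pi' n).map (algebraMap ℝ ℂ)).hasDerivAt
      (Complex.tan (z + a))).comp z h3
    have h5 : HasDerivAt
        (fun w : ℂ => Polynomial.eval (Complex.tan (w + a)) ((Pi' n).map (algebraMap ℝ ℂ)))
        (Polynomial.eval (Complex.tan (z + a))
          (Polynomial.derivative ((Pi' n).map (algebraMap ℝ ℂ))) *
          (1 / Complex.cos (z + a) ^ 2)) z := h4
    rw [h5.deriv]
    show _ = ((Pi' (n + 1)).map (algebraMap ℝ ℂ)).eval (Complex.tan (z + a))
    rw [show Pi' (n + 1) = (1 + Polynomial.X ^ 2) * Polynomial.derivative (Pi' n)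
      from rfl]
    simp only [Polynomial.map_mul, Polynomial.map_add, Polynomial.map_one,
      Polynomial.map_pow, Polynomial.map_X, Polynomial.derivative_map,
      Polynomial.eval_mul, Polynomial.eval_add, Polynomial.eval_one,
      Polynomial.eval_pow, Polynomial.eval_X]
    rw [one_add_tan_sq hz]
    ring

theorem stmt14 (ξ : ℝ) :
    ∃ ε > (0 : ℝ), ∀ t : ℝ, |t| < ε → |ξ * Real.tan t| < 1 →
      ∑' n : ℕ, t ^ n / (Nat.factorial n : ℝ) * (Pi' n).eval ξ =
        (ξ + Real.tan t) / (1 - ξ * Real.tan t) := by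
  set a : ℝ := Real.arctan ξ with ha
  -- pick a ball around 0 on which cos (z + a) ≠ 0
  have hUopen : IsOpen {z : ℂ | Complex.cos (z + (a : ℂ)) ≠ 0} := by
    have : {z : ℂ | Complex.cos (z + (a : ℂ)) ≠ 0} =
        (fun z : ℂ => Complex.cos (z + (a : ℂ))) ⁻¹' {0}ᶜ := rfl
    rw [this]
    exact (Complex.continuous_cos.comp (continuous_id.add continuous_const)).isOpen_preimage _
      isOpen_compl_singleton
  have h0 : (0 : ℂ) ∈ {z : ℂ | Complex.cos (z + (a : ℂ)) ≠ 0} := by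
    simp only [Set.mem_setOf_eq, zero_add, ← Complex.ofReal_cos]
    exact_mod_cast (Real.cos_arctan_pos ξ).ne'
  obtain ⟨r, hr, hball⟩ := Metric.isOpen_iff.mp hUopen 0 h0
  refine ⟨min r (Real.pi / 2), lt_min hr (by positivity), fun t ht hξt => ?_⟩
  have htr : |t| < r := lt_of_lt_of_le ht (min_le_left _ _)
  have htpi : |t| < Real.pi / 2 := lt_of_lt_of_le ht (min_le_right _ _)
  have hcost : Real.cos t ≠ 0 :=
    (Real.cos_pos_of_mem_Ioo ⟨neg_lt_of_abs_lt htpi, lt_of_abs_lt htpi⟩).ne'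
  have hcosa : Real.cos a ≠ 0 := (Real.cos_arctan_pos ξ).ne'
  have htana : Real.tan a = ξ := Real.tan_arctan ξ
  have hden : 1 - ξ * Real.tan t ≠ 0 := by
    intro h
    rw [sub_eq_zero] at h
    rw [← h] at hξt
    simp at hξt
  -- the tangent addition formula
  have htan_add : Real.tan (t + a) = (ξ + Real.tan t) / (1 - ξ * Real.tan t) := by
    have hsina : Real.sin a = ξ * Real.cos a := by
      have h := Real.tan_eq_sin_div_cos a
      rw [htana, eq_div_iff hcosa] at h
      linarith
    have hc : Real.cos (t + a) = Real.cos a * Real.cos t * (1 - ξ * Real.tan t) := by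
      rw [Real.cos_add, hsina, Real.tan_eq_sin_div_cos]
      field_simp
    have hs : Real.sin (t + a) = Real.cos a * (Real.sin t + ξ * Real.cos t) := by
      rw [Real.sin_add, hsina]; ring
    have hcosta : Real.cos (t + a) ≠ 0 := by
      rw [hc]; exact mul_ne_zero (mul_ne_zero hcosa hcost) hden
    rw [Real.tan_eq_sin_div_cos, div_eq_div_iff hcosta hden, hs, hc,
      Real.tan_eq_sin_div_cos]
    field_simp
    ring
  -- differentiability of the complex function on the ball
  have hdiff : DifferentiableOn ℂ (fun z : ℂ => Complex.tan (z + (a : ℂ)))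
      (Metric.ball (0 : ℂ) r) := by
    intro z hz
    have hcz : Complex.cos (z + (a : ℂ)) ≠ 0 := hball hz
    exact (((Complex.differentiableAt_tan.mpr hcz).comp z
      ((differentiableAt_id).add_const _))).differentiableWithinAt
  have htmem : (t : ℂ) ∈ Metric.ball (0 : ℂ) r := by
    simpa using htr
  have hsum := Complex.hasSum_taylorSeries_on_ball hdiff htmem
  -- identify the iterated derivatives
  have hiter : ∀ n : ℕ, iteratedDeriv n (fun z : ℂ => Complex.tan (z + (a : ℂ))) 0
      = (((Pi' n).eval ξ : ℝ) : ℂ) := by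
    intro n
    have := (iter_deriv_eq ξ n).eq_of_nhds
    rw [this]
    simp only [zero_add]
    rw [← Complex.ofReal_tan, htana, Polynomial.eval_map, ← Polynomial.aeval_def]
    exact Polynomial.aeval_algebraMap_apply_eq_algebraMap_eval ξ (Pi' n)
  -- rewrite the summand
  have hsum2 : HasSum (fun n : ℕ =>
      ((t ^ n / (Nat.factorial n : ℝ) * (Pi' n).eval ξ : ℝ) : ℂ))
      (Complex.tan ((t : ℂ) + (a : ℂ))) := by
    convert hsum using 1
    · rfl
    funext n
    rw [hiter n, sub_zero, smul_eq_mul, smul_eq_mul]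
    push_cast
    ring
  have hval : Complex.tan ((t : ℂ) + (a : ℂ)) =
      (((ξ + Real.tan t) / (1 - ξ * Real.tan t) : ℝ) : ℂ) := by
    rw [← Complex.ofReal_add, ← Complex.ofReal_tan, htan_add]
  rw [hval] at hsum2
  have hre := hsum2.mapL Complex.reCLM
  simp only [Complex.reCLM_apply, Complex.ofReal_re] at hre
  exact hre.tsum_eq
end

section
/- Define Q_n(ξ) = (1+ξ²)^{−1/2}·[((1+ξ²)·∂_ξ)^n √(1+ξ²)]. Then Q_n is a polynomial in ξ and coincides with the secant derivative polynomials: ∂_x^n sec(x) = sec(x)·Q_n(tan x) for all x with cos x ≠ 0. -/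
noncomputable def L (g : ℝ → ℝ) : ℝ → ℝ := fun ξ => (1 + ξ ^ 2) * deriv g ξ

noncomputable def Qfun (n : ℕ) (ξ : ℝ) : ℝ :=
  (Real.sqrt (1 + ξ ^ 2))⁻¹ * (L^[n] (fun ξ => Real.sqrt (1 + ξ ^ 2))) ξ

noncomputable def secP : ℕ → Polynomial ℝ
  | 0 => 1
  | n + 1 => (1 + Polynomial.X ^ 2) * (secP n).derivative + Polynomial.X * secP n

lemma pos1 (ξ : ℝ) : (0:ℝ) < 1 + ξ ^ 2 := by positivity

lemma sqrt_pos1 (ξ : ℝ) : (0:ℝ) < Real.sqrt (1 + ξ ^ 2) :=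
  Real.sqrt_pos.mpr (pos1 ξ)

lemma sq_sqrt1 (ξ : ℝ) : Real.sqrt (1 + ξ ^ 2) ^ 2 = 1 + ξ ^ 2 :=
  Real.sq_sqrt (pos1 ξ).le

lemma hasDerivAt_S (ξ : ℝ) :
    HasDerivAt (fun ξ => Real.sqrt (1 + ξ ^ 2))
      (ξ / Real.sqrt (1 + ξ ^ 2)) ξ := by
  have h1 : HasDerivAt (fun ξ : ℝ => 1 + ξ ^ 2) (2 * ξ) ξ := by
    simpa using ((hasDerivAt_pow 2 ξ).const_add 1)
  have := h1.sqrt (pos1 ξ).ne'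
  convert this using 1
  field_simp

lemma iterL (n : ℕ) (ξ : ℝ) :
    (L^[n] (fun ξ => Real.sqrt (1 + ξ ^ 2))) ξ =
      Real.sqrt (1 + ξ ^ 2) * (secP n).eval ξ := by
  induction n generalizing ξ with
  | zero => simp [secP]
  | succ n ih =>
    rw [Function.iterate_succ_apply']
    have hfun : (L^[n] (fun ξ => Real.sqrt (1 + ξ ^ 2))) =
        fun ξ => Real.sqrt (1 + ξ ^ 2) * (secP n).eval ξ := funext ih
    rw [L, hfun]
    have hd : HasDerivAt (fun ξ => Real.sqrt (1 + ξ ^ 2) * (secP n).eval ξ)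
        (ξ / Real.sqrt (1 + ξ ^ 2) * (secP n).eval ξ +
          Real.sqrt (1 + ξ ^ 2) * ((secP n).derivative.eval ξ)) ξ :=
      (hasDerivAt_S ξ).mul (Polynomial.hasDerivAt _ ξ)
    rw [hd.deriv, secP]
    have hs := sq_sqrt1 ξ
    have hne := (sqrt_pos1 ξ).ne'
    simp only [Polynomial.eval_add, Polynomial.eval_mul, Polynomial.eval_one,
      Polynomial.eval_pow, Polynomial.eval_X]
    field_simp
    linear_combination (-(ξ * Polynomial.eval ξ (secP n))) * hs

lemma Qfun_eq (n : ℕ) (ξ : ℝ) : Qfun n ξ = (secP n).eval ξ := by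
  rw [Qfun, iterL, ← mul_assoc, inv_mul_cancel₀ (sqrt_pos1 ξ).ne', one_mul]

theorem stmt16 :
    (∀ n : ℕ, ∃ q : Polynomial ℝ, ∀ ξ : ℝ, Qfun n ξ = q.eval ξ) ∧
      ∀ (n : ℕ) (x : ℝ), Real.cos x ≠ 0 →
        iteratedDeriv n (fun x => 1 / Real.cos x) x =
          (1 / Real.cos x) * Qfun n (Real.tan x) := by
  have key : ∀ (n : ℕ) (x : ℝ), Real.cos x ≠ 0 →
      iteratedDeriv n (fun x => 1 / Real.cos x) x =
        (1 / Real.cos x) * (secP n).eval (Real.tan x) := by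
    intro n
    induction n with
    | zero => intro x hx; simp [secP]
    | succ n ih =>
      intro x hx
      rw [iteratedDeriv_succ]
      have hopen : IsOpen {y : ℝ | Real.cos y ≠ 0} :=
        isOpen_ne.preimage Real.continuous_cos
      have hev : iteratedDeriv n (fun x => 1 / Real.cos x) =ᶠ[nhds x]
          fun y => (1 / Real.cos y) * (secP n).eval (Real.tan y) := by
        filter_upwards [hopen.mem_nhds hx] with y hy using ih y hy
      rw [hev.deriv_eq]
      have hsec : HasDerivAt (fun y => 1 / Real.cos y)
          (Real.sin x / Real.cos x ^ 2) x := by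
        have := (Real.hasDerivAt_cos x).fun_inv hx
        simpa [one_div, div_eq_mul_inv] using this
      have htan := Real.hasDerivAt_tan hx
      have hpoly : HasDerivAt (fun y => (secP n).eval (Real.tan y))
          ((secP n).derivative.eval (Real.tan x) * (1 / Real.cos x ^ 2)) x :=
        (Polynomial.hasDerivAt (secP n) (Real.tan x)).comp x htan
      have hd := hsec.fun_mul hpoly
      rw [hd.deriv, secP]
      simp only [Polynomial.eval_add, Polynomial.eval_mul, Polynomial.eval_one,
        Polynomial.eval_pow, Polynomial.eval_X]
      rw [Real.tan_eq_sin_div_cos]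
      field_simp
      linear_combination (-Polynomial.eval (Real.sin x / Real.cos x) (Polynomial.derivative (secP n))) * Real.sin_sq_add_cos_sq x
  refine ⟨fun n => ⟨secP n, fun ξ => Qfun_eq n ξ⟩, fun n x hx => ?_⟩
  rw [key n x hx, Qfun_eq]
end

section
/- Hoppe's formula: for smooth functions f, g: ℝ → ℝ, every natural number m and real t, ∂_t^m f(g(t)) = Σ_{k=0}^m (1/k!)·f^{(k)}(g(t))·A_{m,k}(t), where A_{m,k}(t) = Σ_{j=0}^k C(k,j)·(−1)^{k−j}·g(t)^{k−j}·∂_t^m(g(t)^j). -/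
open Finset

local notation "∞'" => ((⊤:ℕ∞) : WithTop ℕ∞)

private lemma sm_itd {f : ℝ → ℝ} (hf : ContDiff ℝ ∞' f) (n : ℕ) :
    ContDiff ℝ ∞' (iteratedDeriv n f) := by
  rw [iteratedDeriv_eq_iterate]; exact hf.iterate_deriv n

private lemma sm_deriv {f : ℝ → ℝ} (hf : ContDiff ℝ ∞' f) :
    ContDiff ℝ ∞' (deriv f) := (contDiff_infty_iff_deriv.mp hf).2

private lemma sm_diff {f : ℝ → ℝ} (hf : ContDiff ℝ ∞' f) : Differentiable ℝ f :=
  hf.differentiable (by simp)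

private lemma itd_add {f g : ℝ → ℝ} (hf : ContDiff ℝ ∞' f) (hg : ContDiff ℝ ∞' g)
    (n : ℕ) (x : ℝ) :
    iteratedDeriv n (fun y => f y + g y) x = iteratedDeriv n f x + iteratedDeriv n g x := by
  simp only [← iteratedDerivWithin_univ]
  exact iteratedDerivWithin_add (Set.mem_univ x) uniqueDiffOn_univ
    ((hf.of_le (by exact_mod_cast le_top)).contDiffWithinAt) ((hg.of_le (by exact_mod_cast le_top)).contDiffWithinAt)

private lemma itd_sub {f g : ℝ → ℝ} (hf : ContDiff ℝ ∞' f) (hg : ContDiff ℝ ∞' g)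
    (n : ℕ) (x : ℝ) :
    iteratedDeriv n (fun y => f y - g y) x = iteratedDeriv n f x - iteratedDeriv n g x := by
  simp only [← iteratedDerivWithin_univ]
  exact iteratedDerivWithin_sub (Set.mem_univ x) uniqueDiffOn_univ
    ((hf.of_le (by exact_mod_cast le_top)).contDiffWithinAt) ((hg.of_le (by exact_mod_cast le_top)).contDiffWithinAt)

private lemma itd_const_mul (c : ℝ) {f : ℝ → ℝ} (hf : ContDiff ℝ ∞' f) (n : ℕ) (x : ℝ) :
    iteratedDeriv n (fun y => c * f y) x = c * iteratedDeriv n f x := by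
  simp only [← iteratedDerivWithin_univ]
  exact iteratedDerivWithin_const_mul (Set.mem_univ x) uniqueDiffOn_univ c
    ((hf.of_le (by exact_mod_cast le_top)).contDiffWithinAt)

private lemma itd_zero (n : ℕ) : iteratedDeriv n (fun _ : ℝ => (0:ℝ)) = fun _ => 0 := by
  induction n with
  | zero => funext y; simp
  | succ n ih => funext y; rw [iteratedDeriv_succ, ih]; simp

private lemma itd_sum {ι : Type*} (s : Finset ι) (F : ι → ℝ → ℝ)
    (hF : ∀ i ∈ s, ContDiff ℝ ∞' (F i)) (n : ℕ) (x : ℝ) :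
    iteratedDeriv n (fun y => ∑ i ∈ s, F i y) x = ∑ i ∈ s, iteratedDeriv n (F i) x := by
  classical
  induction s using Finset.induction with
  | empty =>
    simp only [Finset.sum_empty]
    rw [itd_zero n]
  | insert a s hnot ih =>
    have h1 : ContDiff ℝ ∞' (F a) := hF a (mem_insert_self a s)
    have h2 : ContDiff ℝ ∞' (fun y => ∑ i ∈ s, F i y) :=
      ContDiff.sum (fun i hi => hF i (mem_insert_of_mem hi))
    simp only [Finset.sum_insert hnot]
    rw [itd_add h1 h2, ih (fun i hi => hF i (mem_insert_of_mem hi))]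

/-- The k-th iterated derivative of `(· - a)^n`. -/
private lemma itd_pow_sub (a : ℝ) (n : ℕ) : ∀ i : ℕ,
    iteratedDeriv i (fun y : ℝ => (y - a) ^ n) =
      fun y => (n.descFactorial i : ℝ) * (y - a) ^ (n - i) := by
  intro i
  induction i with
  | zero => funext y; simp
  | succ i ih =>
    funext y
    rw [iteratedDeriv_succ, ih]
    have hd : HasDerivAt (fun y : ℝ => (y - a) ^ (n - i))
        ((n - i : ℕ) * (y - a) ^ (n - i - 1)) y := by
      simpa using (((hasDerivAt_id y).sub_const a).fun_pow (n - i))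
    have : deriv (fun y : ℝ => (n.descFactorial i : ℝ) * (y - a) ^ (n - i)) y
        = (n.descFactorial i : ℝ) * ((n - i : ℕ) * (y - a) ^ (n - i - 1)) := by
      rw [deriv_const_mul _ hd.differentiableAt, hd.deriv]
    rw [this, Nat.descFactorial_succ, (by omega : n - (i + 1) = n - i - 1)]
    push_cast [Nat.cast_mul]
    ring

private lemma itd_pow_sub_self (a : ℝ) (n i : ℕ) :
    iteratedDeriv i (fun y : ℝ => (y - a) ^ n) a
      = if i = n then (n.factorial : ℝ) else 0 := by
  rw [itd_pow_sub]
  rcases lt_trichotomy i n with h | h | h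
  · simp [h.ne, zero_pow (by omega : n - i ≠ 0)]
  · subst h; simp [Nat.descFactorial_self]
  · simp [h.ne', Nat.descFactorial_eq_zero_iff_lt.mpr h]

/-- Sum of list representation. -/
private noncomputable def SumF (E g : ℝ → ℝ) (l : List (ℕ × (ℝ → ℝ))) : ℝ → ℝ :=
  fun s => (l.map (fun p => iteratedDeriv p.1 E (g s) * p.2 s)).sum

private lemma sm_SumF {E g : ℝ → ℝ} (hE : ContDiff ℝ ∞' E) (hg : ContDiff ℝ ∞' g)
    (l : List (ℕ × (ℝ → ℝ))) (hl : ∀ p ∈ l, ContDiff ℝ ∞' p.2) :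
    ContDiff ℝ ∞' (SumF E g l) := by
  induction l with
  | nil => exact (contDiff_const : ContDiff ℝ ∞' (fun _ : ℝ => (0:ℝ)))
  | cons p l ih =>
    have : SumF E g (p :: l) = fun s => iteratedDeriv p.1 E (g s) * p.2 s + SumF E g l s := by
      funext s; simp [SumF]
    rw [this]
    exact (((sm_itd hE p.1).comp hg).mul (hl p (by simp))).add
      (ih (fun q hq => hl q (by simp [hq])))

private noncomputable def stepP (g : ℝ → ℝ) (p : ℕ × (ℝ → ℝ)) : List (ℕ × (ℝ → ℝ)) :=
  [(p.1 + 1, fun s => deriv g s * p.2 s), (p.1, fun s => deriv p.2 s)]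

private lemma deriv_SumF {E g : ℝ → ℝ} (hE : ContDiff ℝ ∞' E) (hg : ContDiff ℝ ∞' g)
    (l : List (ℕ × (ℝ → ℝ))) (hl : ∀ p ∈ l, ContDiff ℝ ∞' p.2) (x : ℝ) :
    deriv (SumF E g l) x = SumF E g (l.flatMap (stepP g)) x := by
  induction l with
  | nil =>
    have h0 : SumF E g ([] : List (ℕ × (ℝ → ℝ))) = fun _ => (0:ℝ) := by funext s; simp [SumF]
    rw [h0]
    simp [SumF]
  | cons p l ih =>
    have hp : ContDiff ℝ ∞' p.2 := hl p (by simp)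
    have hl' : ∀ q ∈ l, ContDiff ℝ ∞' q.2 := fun q hq => hl q (by simp [hq])
    have e1 : SumF E g (p :: l) = fun s => iteratedDeriv p.1 E (g s) * p.2 s + SumF E g l s := by
      funext s; simp [SumF]
    have d1 : DifferentiableAt ℝ (fun s => iteratedDeriv p.1 E (g s) * p.2 s) x :=
      ((sm_diff ((sm_itd hE p.1).comp hg)).differentiableAt).mul
        ((sm_diff hp).differentiableAt)
    have d2 : DifferentiableAt ℝ (SumF E g l) x :=
      (sm_diff (sm_SumF hE hg l hl')).differentiableAt
    have dcomp : HasDerivAt (fun s => iteratedDeriv p.1 E (g s))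
        (deriv (iteratedDeriv p.1 E) (g x) * deriv g x) x :=
      ((sm_diff (sm_itd hE p.1)).differentiableAt.hasDerivAt).comp x
        ((sm_diff hg).differentiableAt.hasDerivAt)
    have dprod : HasDerivAt (fun s => iteratedDeriv p.1 E (g s) * p.2 s)
        (deriv (iteratedDeriv p.1 E) (g x) * deriv g x * p.2 x
          + iteratedDeriv p.1 E (g x) * deriv p.2 x) x :=
      dcomp.mul ((sm_diff hp).differentiableAt.hasDerivAt)
    rw [e1, deriv_fun_add d1 d2]
    have : deriv (fun s => iteratedDeriv p.1 E (g s) * p.2 s) x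
        = iteratedDeriv (p.1 + 1) E (g x) * (deriv g x * p.2 x)
          + iteratedDeriv p.1 E (g x) * deriv p.2 x := by
      rw [dprod.deriv, iteratedDeriv_succ]; ring
    rw [this, ih hl']
    simp [SumF, stepP, List.flatMap_cons]
    ring

private lemma key_s19 (g E : ℝ → ℝ) (hg : ContDiff ℝ ∞' g) (hE : ContDiff ℝ ∞' E) (m : ℕ) :
    ∃ l : List (ℕ × (ℝ → ℝ)), (∀ p ∈ l, p.1 ≤ m ∧ ContDiff ℝ ∞' p.2) ∧
      iteratedDeriv m (fun s => E (g s)) = SumF E g l := by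
  induction m with
  | zero =>
    refine ⟨[(0, fun _ => 1)], by simp [contDiff_const], ?_⟩
    funext s; simp [SumF]
  | succ m ih =>
    obtain ⟨l, hl, hrep⟩ := ih
    refine ⟨l.flatMap (stepP g), ?_, ?_⟩
    · intro p hp
      rw [List.mem_flatMap] at hp
      obtain ⟨q, hq, hpq⟩ := hp
      obtain ⟨hq1, hq2⟩ := hl q hq
      simp only [stepP, List.mem_cons, List.mem_singleton] at hpq
      rcases hpq with rfl | hpq
      · exact ⟨by omega, (sm_deriv hg).mul hq2⟩
      · simp at hpq; subst hpq
        exact ⟨by omega, sm_deriv hq2⟩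
    · funext x
      rw [iteratedDeriv_succ, hrep]
      exact deriv_SumF hE hg l (fun p hp => (hl p hp).2) x

private lemma vanish (g E : ℝ → ℝ) (hg : ContDiff ℝ ∞' g) (hE : ContDiff ℝ ∞' E)
    (m : ℕ) (t : ℝ) (h0 : ∀ i ≤ m, iteratedDeriv i E (g t) = 0) :
    iteratedDeriv m (fun s => E (g s)) t = 0 := by
  obtain ⟨l, hl, hrep⟩ := key_s19 g E hg hE m
  rw [hrep]
  unfold SumF
  apply List.sum_eq_zero
  intro y hy
  rw [List.mem_map] at hy
  obtain ⟨p, hp, rfl⟩ := hy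
  rw [h0 p.1 (hl p hp).1, zero_mul]

/-- Hoppe's formula for repeated derivatives of a composite function. -/
theorem stmt19 (f g : ℝ → ℝ) (hf : ContDiff ℝ (⊤ : ℕ∞) f) (hg : ContDiff ℝ (⊤ : ℕ∞) g)
    (m : ℕ) (t : ℝ) :
    iteratedDeriv m (fun t => f (g t)) t =
      ∑ k ∈ range (m + 1),
        (1 / (Nat.factorial k : ℝ)) * iteratedDeriv k f (g t) *
          ∑ j ∈ range (k + 1),
            (Nat.choose k j : ℝ) * (-1 : ℝ) ^ (k - j) * g t ^ (k - j) *
              iteratedDeriv m (fun t => g t ^ j) t := by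
  have hf' : ContDiff ℝ ∞' f := hf.of_le (by exact_mod_cast le_top)
  have hg' : ContDiff ℝ ∞' g := hg.of_le (by exact_mod_cast le_top)
  set a := g t with ha
  set c : ℕ → ℝ := fun k => (1 / (Nat.factorial k : ℝ)) * iteratedDeriv k f a with hc
  set P : ℝ → ℝ := fun y => ∑ k ∈ range (m + 1), c k * (y - a) ^ k with hP
  set E : ℝ → ℝ := fun y => f y - P y with hEdef
  have hpows : ∀ k : ℕ, ContDiff ℝ ∞' (fun y : ℝ => (y - a) ^ k) := fun k =>
    (contDiff_id.sub contDiff_const).pow k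
  have hPsm : ContDiff ℝ ∞' P :=
    ContDiff.sum fun k _ => contDiff_const.mul (hpows k)
  have hEsm : ContDiff ℝ ∞' E := hf'.sub hPsm
  -- derivatives of P at a
  have hPder : ∀ i ≤ m, iteratedDeriv i P a = iteratedDeriv i f a := by
    intro i hi
    rw [hP]
    rw [itd_sum (range (m + 1)) (fun k => fun y => c k * (y - a) ^ k)
      (fun k _ => contDiff_const.mul (hpows k)) i a]
    have : ∀ k ∈ range (m + 1), iteratedDeriv i (fun y => c k * (y - a) ^ k) a
        = if i = k then c k * (k.factorial : ℝ) else 0 := by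
      intro k _
      rw [itd_const_mul (c k) (hpows k) i a, itd_pow_sub_self a k i]
      split <;> simp
    rw [Finset.sum_congr rfl this, Finset.sum_ite_eq (range (m + 1)) i
      (fun k => c k * (k.factorial : ℝ))]
    rw [if_pos (mem_range.mpr (by omega))]
    rw [hc]
    field_simp
  have hE0 : ∀ i ≤ m, iteratedDeriv i E (g t) = 0 := by
    intro i hi
    rw [hEdef, ← ha, itd_sub hf' hPsm i a, hPder i hi, sub_self]
  -- split f ∘ g
  have hsplit : (fun s => f (g s)) = fun s => E (g s) + P (g s) := by
    funext s; simp [hEdef]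
  rw [hsplit, itd_add (f := fun s => E (g s)) (g := fun s => P (g s))
      (hEsm.comp hg') (hPsm.comp hg') m t,
    vanish g E hg' hEsm m t hE0, zero_add]
  -- now compute iteratedDeriv m (P ∘ g) t
  have hPg : (fun s => P (g s)) = fun s => ∑ k ∈ range (m + 1), c k * (g s - a) ^ k := by
    funext s; simp [hP]
  rw [hPg, itd_sum (range (m + 1)) (fun k => fun s => c k * (g s - a) ^ k)
    (fun k _ => contDiff_const.mul ((hg'.sub contDiff_const).pow k)) m t]
  refine Finset.sum_congr rfl fun k _ => ?_
  rw [itd_const_mul (c k) ((hg'.sub contDiff_const).pow k) m t]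
  have hbin : (fun s => (g s - a) ^ k)
      = fun s => ∑ j ∈ range (k + 1),
          ((Nat.choose k j : ℝ) * (-1 : ℝ) ^ (k - j) * a ^ (k - j)) * g s ^ j := by
    funext s
    rw [sub_pow]
    refine Finset.sum_congr rfl fun j hj => ?_
    have hjk : j ≤ k := by simp at hj; omega
    have hpar : (j + k) % 2 = (k - j) % 2 := by omega
    have : (-1 : ℝ) ^ (j + k) = (-1 : ℝ) ^ (k - j) := by
      rw [neg_one_pow_eq_pow_mod_two, hpar, ← neg_one_pow_eq_pow_mod_two]
    rw [this]; ring
  rw [hbin, itd_sum (range (k + 1))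
    (fun j => fun s => ((Nat.choose k j : ℝ) * (-1 : ℝ) ^ (k - j) * a ^ (k - j)) * g s ^ j)
    (fun j _ => contDiff_const.mul (hg'.pow j)) m t]
  have hck : (1 / (Nat.factorial k : ℝ)) * iteratedDeriv k f a = c k := rfl
  rw [hck]
  congr 1
  refine Finset.sum_congr rfl fun j _ => ?_
  rw [itd_const_mul _ (hg'.pow j) m t]
end
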